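/- The truncated-soliton mass function m(λ) = ∫₀^λ (φ(y) − φ(λ))² dy is continuous and strictly increasing on (0, ∞). -/

import Mathlib

open Real MeasureTheory Set Filter

/-- The soliton `φ(x) = cosh(2x/√3)^(-1/2)`. -/
noncomputable def soliton (x : ℝ) : ℝ := (Real.cosh (2 * x / Real.sqrt 3)) ^ (-(1/2) : ℝ)

/-- The truncated-soliton mass function `m(λ) = ∫₀^λ (φ(y) − φ(λ))² dy`. -/
noncomputable def truncMass (l : ℝ) : ℝ :=
  ∫ y in Set.Ioo (0:ℝ) l, (soliton y - soliton l) ^ 2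

/-!
Both properties hold for `λ ↦ ∫₀^λ (f y - f λ)² dy` whenever `f` is continuous and strictly
decreasing on `(0, ∞)`. Continuity: this is a parametric integral whose integrand
`(y, λ) ↦ (f y - f λ)²` and upper endpoint depend continuously on `λ`. Monotonicity: for
`0 < a < b` and `y ≤ a` we have `0 ≤ f y - f a < f y - f b`, so lowering the truncation level
from `f a` to `f b` strictly increases the integral over `(0, a)`, and extending the domain to
`(0, b)` adds a nonnegative integrand.
-/

section TruncatedMass

variable {f : ℝ → ℝ}

theorem setIntegral_Ioo_eq_intervalIntegral {g : ℝ → ℝ} {l : ℝ} (hl : 0 ≤ l) :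
    ∫ y in Ioo 0 l, g y = ∫ y in (0 : ℝ)..l, g y := by
  rw [intervalIntegral.integral_of_le hl, integral_Ioc_eq_integral_Ioo]

theorem continuousOn_integral_Ioo_sub_sq (hf : Continuous f) :
    ContinuousOn (fun l ↦ ∫ y in Ioo 0 l, (f y - f l) ^ 2) (Ioi 0) := by
  have hprimitive : Continuous fun l ↦ ∫ y in (0 : ℝ)..l, (f y - f l) ^ 2 :=
    intervalIntegral.continuous_parametric_intervalIntegral_of_continuous
      (f := fun l y ↦ (f y - f l) ^ 2) (by fun_prop) continuous_id
  exact hprimitive.continuousOn.congr fun l hl ↦ setIntegral_Ioo_eq_intervalIntegral (le_of_lt hl)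

theorem sq_sub_le_sq_sub {x a b : ℝ} (hxa : a ≤ x) (hab : b < a) : (x - a) ^ 2 ≤ (x - b) ^ 2 := by
  nlinarith

theorem strictMonoOn_integral_Ioo_sub_sq (hf : Continuous f) (hanti : StrictAntiOn f (Ioi 0)) :
    StrictMonoOn (fun l ↦ ∫ y in Ioo 0 l, (f y - f l) ^ 2) (Ioi 0) := by
  intro a ha b hb hab
  have hfab : f b < f a := hanti ha hb hab
  simp only [setIntegral_Ioo_eq_intervalIntegral (le_of_lt ha),
    setIntegral_Ioo_eq_intervalIntegral (le_of_lt hb)]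
  calc ∫ y in (0 : ℝ)..a, (f y - f a) ^ 2
      < ∫ y in (0 : ℝ)..a, (f y - f b) ^ 2 := by
        refine intervalIntegral.integral_lt_integral_of_continuousOn_of_le_of_exists_lt ha
          (by fun_prop) (by fun_prop) (fun y hy ↦ ?_) ⟨a, right_mem_Icc.2 (le_of_lt ha), ?_⟩
        · exact sq_sub_le_sq_sub (hanti.antitoneOn hy.1 ha hy.2) hfab
        · rw [sub_self, zero_pow two_ne_zero]
          exact pow_pos (sub_pos.2 hfab) 2
    _ ≤ ∫ y in (0 : ℝ)..b, (f y - f b) ^ 2 :=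
        intervalIntegral.integral_mono_interval le_rfl (le_of_lt ha) (le_of_lt hab)
          (ae_of_all _ fun _ ↦ sq_nonneg _) (Continuous.intervalIntegrable (by fun_prop) _ _)

end TruncatedMass

theorem continuous_soliton : Continuous soliton :=
  (continuous_cosh.comp (by fun_prop)).rpow_const fun _ ↦ Or.inl (cosh_pos _).ne'

theorem soliton_strictAntiOn : StrictAntiOn soliton (Ici 0) := by
  intro x hx y hy hxy
  have hscaled : 2 * x / √3 < 2 * y / √3 := by gcongr
  have hcosh : cosh (2 * x / √3) < cosh (2 * y / √3) :=
    cosh_strictMonoOn (by simp only [mem_Ici] at hx ⊢; positivity)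
      (by simp only [mem_Ici] at hy ⊢; positivity) hscaled
  exact rpow_lt_rpow_of_neg (cosh_pos _) hcosh (by norm_num)

theorem stmt_10 :
    ContinuousOn truncMass (Set.Ioi 0) ∧ StrictMonoOn truncMass (Set.Ioi 0) :=
  ⟨continuousOn_integral_Ioo_sub_sq continuous_soliton,
    strictMonoOn_integral_Ioo_sub_sq continuous_soliton
      (soliton_strictAntiOn.mono Ioi_subset_Ici_self)⟩
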